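/- The function A2 : (0,∞)^2 → ℝ has exactly one critical point (i.e. exactly one point where both partial derivatives vanish); this critical point is of the form (b*, b*) for some b* > 0, and A2 attains its absolute minimum over (0,∞)^2 there. -/

import Mathlib

set_option maxHeartbeats 3200000

/-- Numerator polynomial of LeBrun's functional `A` on `CP² # 2 CP²-bar`. -/
noncomputable def N2 (b c : ℝ) : ℝ :=
  3 + 28*c + 96*c^2 + 168*c^3 + 164*c^4 + 80*c^5 + 16*c^6
  + 16*b^6*(1+c)^4
  + 16*b^5*(5 + 24*c + 43*c^2 + 37*c^3 + 15*c^4 + 2*c^5)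
  + 4*b^4*(41 + 228*c + 478*c^2 + 496*c^3 + 263*c^4 + 60*c^5 + 4*c^6)
  + 8*b^3*(21 + 135*c + 326*c^2 + 392*c^3 + 248*c^4 + 74*c^5 + 8*c^6)
  + 4*b*(7 + 58*c + 176*c^2 + 270*c^3 + 228*c^4 + 96*c^5 + 16*c^6)
  + 4*b^2*(24 + 176*c + 479*c^2 + 652*c^3 + 478*c^4 + 172*c^5 + 24*c^6)

/-- Denominator polynomial of LeBrun's functional `A` on `CP² # 2 CP²-bar`. -/
noncomputable def D2 (b c : ℝ) : ℝ :=
  1 + 10*c + 36*c^2 + 64*c^3 + 60*c^4 + 24*c^5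
  + 24*b^5*(1+c)^5
  + 12*b^4*(1+c)^2*(5 + 20*c + 23*c^2 + 10*c^3)
  + 16*b^3*(4 + 28*c + 72*c^2 + 90*c^3 + 57*c^4 + 15*c^5)
  + 12*b^2*(3 + 24*c + 69*c^2 + 96*c^3 + 68*c^4 + 20*c^5)
  + 2*b*(5 + 45*c + 144*c^2 + 224*c^3 + 180*c^4 + 60*c^5)

/-- LeBrun's normalized Calabi-energy functional on the reduced Kähler cone
of `CP² # 2 CP²-bar`. -/
noncomputable def A2 (b c : ℝ) : ℝ := 3 * N2 b c / D2 b c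

noncomputable def N2b (b c : ℝ) : ℝ := (28 + 232*c + 704*c^2 + 1080*c^3 + 912*c^4 + 384*c^5 + 64*c^6 + 192*b + 1408*b*c + 3832*b*c^2 + 5216*b*c^3 + 3824*b*c^4 + 1376*b*c^5 + 192*b*c^6 + 504*b^2 + 3240*b^2*c + 7824*b^2*c^2 + 9408*b^2*c^3 + 5952*b^2*c^4 + 1776*b^2*c^5 + 192*b^2*c^6 + 656*b^3 + 3648*b^3*c + 7648*b^3*c^2 + 7936*b^3*c^3 + 4208*b^3*c^4 + 960*b^3*c^5 + 64*b^3*c^6 + 400*b^4 + 1920*b^4*c + 3440*b^4*c^2 + 2960*b^4*c^3 + 1200*b^4*c^4 + 160*b^4*c^5 + 96*b^5 + 384*b^5*c + 576*b^5*c^2 + 384*b^5*c^3 + 96*b^5*c^4)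

noncomputable def D2b (b c : ℝ) : ℝ := (10 + 90*c + 288*c^2 + 448*c^3 + 360*c^4 + 120*c^5 + 72*b + 576*b*c + 1656*b*c^2 + 2304*b*c^3 + 1632*b*c^4 + 480*b*c^5 + 192*b^2 + 1344*b^2*c + 3456*b^2*c^2 + 4320*b^2*c^3 + 2736*b^2*c^4 + 720*b^2*c^5 + 240*b^3 + 1440*b^3*c + 3264*b^3*c^2 + 3648*b^3*c^3 + 2064*b^3*c^4 + 480*b^3*c^5 + 120*b^4 + 600*b^4*c + 1200*b^4*c^2 + 1200*b^4*c^3 + 600*b^4*c^4 + 120*b^4*c^5)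

noncomputable def Fb (b c : ℝ) : ℝ := N2b b c * D2 b c - N2 b c * D2b b c

noncomputable def Gp (b c : ℝ) : ℝ := (14 + 192*c + 1176*c^2 + 4272*c^3 + 10256*c^4 + 17056*c^5 + 19904*c^6 + 16064*c^7 + 8544*c^8 + 2688*c^9 + 384*c^10 + 192*b + 2496*b*c + 14656*b*c^2 + 51248*b*c^3 + 118400*b*c^4 + 189056*b*c^5 + 211072*b*c^6 + 162112*b*c^7 + 81408*b*c^8 + 23808*b*c^9 + 3072*b*c^10 + 1176*b^2 + 14656*b^2*c + 82840*b^2*c^2 + 278640*b^2*c^3 + 617136*b^2*c^4 + 940096*b^2*c^5 + 995360*b^2*c^6 + 719936*b^2*c^7 + 337728*b^2*c^8 + 91392*b^2*c^9 + 10752*b^2*c^10 + 4272*b^3 + 51248*b^3*c + 278640*b^3*c^2 + 898272*b^3*c^3 + 1896960*b^3*c^4 + 2738944*b^3*c^5 + 2730816*b^3*c^6 + 1846912*b^3*c^7 + 804096*b^3*c^8 + 200448*b^3*c^9 + 21504*b^3*c^10 + 10256*b^4 + 118400*b^4*c + 617136*b^4*c^2 + 1896960*b^4*c^3 + 3797280*b^4*c^4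 + 5165408*b^4*c^5 + 4820928*b^4*c^6 + 3030848*b^4*c^7 + 1216896*b^4*c^8 + 277248*b^4*c^9 + 26880*b^4*c^10 + 17056*b^5 + 189056*b^5*c + 940096*b^5*c^2 + 2738944*b^5*c^3 + 5165408*b^5*c^4 + 6580288*b^5*c^5 + 5715072*b^5*c^6 + 3318592*b^5*c^7 + 1218432*b^5*c^8 + 250368*b^5*c^9 + 21504*b^5*c^10 + 19904*b^6 + 211072*b^6*c + 995360*b^6*c^2 + 2730816*b^6*c^3 + 4820928*b^6*c^4 + 5715072*b^6*c^5 + 4587680*b^6*c^6 + 2439744*b^6*c^7 + 808896*b^6*c^8 + 146688*b^6*c^9 + 10752*b^6*c^10 + 16064*b^7 + 162112*b^7*c + 719936*b^7*c^2 + 1846912*b^7*c^3 + 3030848*b^7*c^4 + 3318592*b^7*c^5 + 2439744*b^7*c^6 + 1173120*b^7*c^7 + 344064*b^7*c^8 + 52992*b^7*c^9 + 3072*b^7*c^10 + 8544*b^8 + 81408*b^8*c + 337728*b^8*c^2 + 804096*b^8*c^3 + 1216896*b^8*c^4 + 1218432*b^8*c^5 + 808896*b^8*c^6 + 344064*b^8*c^7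 + 85920*b^8*c^8 + 10368*b^8*c^9 + 384*b^8*c^10 + 2688*b^9 + 23808*b^9*c + 91392*b^9*c^2 + 200448*b^9*c^3 + 277248*b^9*c^4 + 250368*b^9*c^5 + 146688*b^9*c^6 + 52992*b^9*c^7 + 10368*b^9*c^8 + 768*b^9*c^9 + 384*b^10 + 3072*b^10*c + 10752*b^10*c^2 + 21504*b^10*c^3 + 26880*b^10*c^4 + 21504*b^10*c^5 + 10752*b^10*c^6 + 3072*b^10*c^7 + 384*b^10*c^8)

noncomputable def pp (t : ℝ) : ℝ := (-2 - 62*t - 848*t^2 - 6800*t^3 - 35800*t^4 - 131000*t^5 - 342672*t^6 - 644096*t^7 - 847616*t^8 - 700448*t^9 - 169504*t^10 + 432064*t^11 + 725216*t^12 + 629088*t^13 + 358464*t^14 + 139008*t^15 + 35616*t^16 + 5472*t^17 + 384*t^18)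

lemma N2_symm (x y : ℝ) : N2 x y = N2 y x := by simp only [N2]; ring

lemma D2_symm (x y : ℝ) : D2 x y = D2 y x := by simp only [D2]; ring

lemma A2_symm (x y : ℝ) : A2 x y = A2 y x := by
  simp only [A2, N2_symm x y, D2_symm x y]

lemma D2_pos {x y : ℝ} (hx : 0 < x) (hy : 0 < y) : 0 < D2 x y := by
  simp only [D2]; positivity

lemma Gp_pos {x y : ℝ} (hx : 0 < x) (hy : 0 < y) : 0 < Gp x y := by
  simp only [Gp]; positivity

lemma hasDerivAt_poly10 (a0 a1 a2 a3 a4 a5 a6 a7 a8 a9 a10 x : ℝ) :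
    HasDerivAt (fun t : ℝ => a0 + a1*t^1 + a2*t^2 + a3*t^3 + a4*t^4 + a5*t^5 + a6*t^6 + a7*t^7 + a8*t^8 + a9*t^9 + a10*t^10)
      (a1 + 2*a2*x^1 + 3*a3*x^2 + 4*a4*x^3 + 5*a5*x^4 + 6*a6*x^5 + 7*a7*x^6 + 8*a8*x^7 + 9*a9*x^8 + 10*a10*x^9) x := by
  have h := (((((((((((hasDerivAt_const x a0).add ((hasDerivAt_pow 1 x).const_mul a1)).add ((hasDerivAt_pow 2 x).const_mul a2)).add ((hasDerivAt_pow 3 x).const_mul a3)).add ((hasDerivAt_pow 4 x).const_mul a4)).add ((hasDerivAt_pow 5 x).const_mul a5)).add ((hasDerivAt_pow 6 x).const_mul a6)).add ((hasDerivAt_pow 7 x).const_mul a7)).add ((hasDerivAt_pow 8 x).const_mul a8)).add ((hasDerivAt_pow 9 x).const_mul a9)).add ((hasDerivAt_pow 10 x).const_mul a10))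
  refine h.congr_deriv (Eq.symm ?_)
  push_cast
  ring

lemma hasDerivAt_N2_left (y x : ℝ) :
    HasDerivAt (fun t : ℝ => N2 t y) (N2b x y) x := by
  have e : (fun t : ℝ => N2 t y) = (fun t : ℝ => (3 + 28*y + 96*y^2 + 168*y^3 + 164*y^4 + 80*y^5 + 16*y^6) + (28 + 232*y + 704*y^2 + 1080*y^3 + 912*y^4 + 384*y^5 + 64*y^6)*t^1 + (96 + 704*y + 1916*y^2 + 2608*y^3 + 1912*y^4 + 688*y^5 + 96*y^6)*t^2 + (168 + 1080*y + 2608*y^2 + 3136*y^3 + 1984*y^4 + 592*y^5 + 64*y^6)*t^3 + (164 + 912*y + 1912*y^2 + 1984*y^3 + 1052*y^4 + 240*y^5 + 16*y^6)*t^4 + (80 + 384*y + 688*y^2 + 592*y^3 + 240*y^4 + 32*y^5)*t^5 + (16 + 64*y + 96*y^2 + 64*y^3 + 16*y^4)*t^6 + (0 : ℝ)*t^7 + (0 : ℝ)*t^8 + (0 : ℝ)*t^9 + (0 : ℝ)*t^10) := by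
    funext t; simp only [N2]; ring
  rw [e]
  convert hasDerivAt_poly10 (3 + 28*y + 96*y^2 + 168*y^3 + 164*y^4 + 80*y^5 + 16*y^6) (28 + 232*y + 704*y^2 + 1080*y^3 + 912*y^4 + 384*y^5 + 64*y^6) (96 + 704*y + 1916*y^2 + 2608*y^3 + 1912*y^4 + 688*y^5 + 96*y^6) (168 + 1080*y + 2608*y^2 + 3136*y^3 + 1984*y^4 + 592*y^5 + 64*y^6) (164 + 912*y + 1912*y^2 + 1984*y^3 + 1052*y^4 + 240*y^5 + 16*y^6) (80 + 384*y + 688*y^2 + 592*y^3 + 240*y^4 + 32*y^5) (16 + 64*y + 96*y^2 + 64*y^3 + 16*y^4) (0 : ℝ) (0 : ℝ) (0 : ℝ) (0 : ℝ) x using 1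
  simp only [N2b]; ring

lemma hasDerivAt_D2_left (y x : ℝ) :
    HasDerivAt (fun t : ℝ => D2 t y) (D2b x y) x := by
  have e : (fun t : ℝ => D2 t y) = (fun t : ℝ => (1 + 10*y + 36*y^2 + 64*y^3 + 60*y^4 + 24*y^5) + (10 + 90*y + 288*y^2 + 448*y^3 + 360*y^4 + 120*y^5)*t^1 + (36 + 288*y + 828*y^2 + 1152*y^3 + 816*y^4 + 240*y^5)*t^2 + (64 + 448*y + 1152*y^2 + 1440*y^3 + 912*y^4 + 240*y^5)*t^3 + (60 + 360*y + 816*y^2 + 912*y^3 + 516*y^4 + 120*y^5)*t^4 + (24 + 120*y + 240*y^2 + 240*y^3 + 120*y^4 + 24*y^5)*t^5 + (0 : ℝ)*t^6 + (0 : ℝ)*t^7 + (0 : ℝ)*t^8 + (0 : ℝ)*t^9 + (0 : ℝ)*t^10) := by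
    funext t; simp only [D2]; ring
  rw [e]
  convert hasDerivAt_poly10 (1 + 10*y + 36*y^2 + 64*y^3 + 60*y^4 + 24*y^5) (10 + 90*y + 288*y^2 + 448*y^3 + 360*y^4 + 120*y^5) (36 + 288*y + 828*y^2 + 1152*y^3 + 816*y^4 + 240*y^5) (64 + 448*y + 1152*y^2 + 1440*y^3 + 912*y^4 + 240*y^5) (60 + 360*y + 816*y^2 + 912*y^3 + 516*y^4 + 120*y^5) (24 + 120*y + 240*y^2 + 240*y^3 + 120*y^4 + 24*y^5) (0 : ℝ) (0 : ℝ) (0 : ℝ) (0 : ℝ) (0 : ℝ) x using 1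
  simp only [D2b]; ring

lemma hasDerivAt_N2_diag (x : ℝ) :
    HasDerivAt (fun t : ℝ => N2 t t) (2 * N2b x x) x := by
  have e : (fun t : ℝ => N2 t t) = (fun t : ℝ => (3 : ℝ) + (56 : ℝ)*t^1 + (424 : ℝ)*t^2 + (1744 : ℝ)*t^3 + (4404 : ℝ)*t^4 + (7200 : ℝ)*t^5 + (7760 : ℝ)*t^6 + (5472 : ℝ)*t^7 + (2428 : ℝ)*t^8 + (608 : ℝ)*t^9 + (64 : ℝ)*t^10) := by
    funext t; simp only [N2]; ring
  rw [e]
  convert hasDerivAt_poly10 (3 : ℝ) (56 : ℝ) (424 : ℝ) (1744 : ℝ) (4404 : ℝ) (7200 : ℝ) (7760 : ℝ) (5472 : ℝ) (2428 : ℝ) (608 : ℝ) (64 : ℝ) x using 1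
  simp only [N2b]; ring

lemma hasDerivAt_D2_diag (x : ℝ) :
    HasDerivAt (fun t : ℝ => D2 t t) (2 * D2b x x) x := by
  have e : (fun t : ℝ => D2 t t) = (fun t : ℝ => (1 : ℝ) + (20 : ℝ)*t^1 + (162 : ℝ)*t^2 + (704 : ℝ)*t^3 + (1844 : ℝ)*t^4 + (3072 : ℝ)*t^5 + (3312 : ℝ)*t^6 + (2304 : ℝ)*t^7 + (996 : ℝ)*t^8 + (240 : ℝ)*t^9 + (24 : ℝ)*t^10) := by
    funext t; simp only [D2]; ring
  rw [e]
  convert hasDerivAt_poly10 (1 : ℝ) (20 : ℝ) (162 : ℝ) (704 : ℝ) (1844 : ℝ) (3072 : ℝ) (3312 : ℝ) (2304 : ℝ) (996 : ℝ) (240 : ℝ) (24 : ℝ) x using 1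
  simp only [D2b]; ring

lemma hasDerivAt_N2_line (s x : ℝ) :
    HasDerivAt (fun t : ℝ => N2 t (s - t)) (N2b x (s - x) - N2b (s - x) x) x := by
  have e : (fun t : ℝ => N2 t (s - t)) = (fun t : ℝ => (3 + 28*s + 96*s^2 + 168*s^3 + 164*s^4 + 80*s^5 + 16*s^6) + (0 + 40*s + 200*s^2 + 424*s^3 + 512*s^4 + 288*s^5 + 64*s^6)*t^1 + (-40 - 200*s - 340*s^2 - 240*s^3 + 232*s^4 + 304*s^5 + 96*s^6)*t^2 + (0 - 168*s - 544*s^2 - 992*s^3 - 496*s^4 + 16*s^5 + 64*s^6)*t^3 + (84 + 272*s + 376*s^2 - 352*s^3 - 468*s^4 - 144*s^5 + 16*s^6)*t^4 + (0 + 144*s + 720*s^2 + 384*s^3 + 0*s^4 - 64*s^5)*t^5 + (-48 - 240*s + 152*s^2 + 224*s^3 + 96*s^4)*t^6 + (0 - 240*s - 192*s^2 - 64*s^3)*t^7 + (60 + 48*s + 16*s^2)*t^8 + (0 + 0*s)*t^9 + (0)*t^10) := by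
    funext t; simp only [N2]; ring
  rw [e]
  convert hasDerivAt_poly10 (3 + 28*s + 96*s^2 + 168*s^3 + 164*s^4 + 80*s^5 + 16*s^6) (0 + 40*s + 200*s^2 + 424*s^3 + 512*s^4 + 288*s^5 + 64*s^6) (-40 - 200*s - 340*s^2 - 240*s^3 + 232*s^4 + 304*s^5 + 96*s^6) (0 - 168*s - 544*s^2 - 992*s^3 - 496*s^4 + 16*s^5 + 64*s^6) (84 + 272*s + 376*s^2 - 352*s^3 - 468*s^4 - 144*s^5 + 16*s^6) (0 + 144*s + 720*s^2 + 384*s^3 + 0*s^4 - 64*s^5) (-48 - 240*s + 152*s^2 + 224*s^3 + 96*s^4) (0 - 240*s - 192*s^2 - 64*s^3) (60 + 48*s + 16*s^2) (0 + 0*s) (0) x using 1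
  simp only [N2b]; ring

lemma hasDerivAt_D2_line (s x : ℝ) :
    HasDerivAt (fun t : ℝ => D2 t (s - t)) (D2b x (s - x) - D2b (s - x) x) x := by
  have e : (fun t : ℝ => D2 t (s - t)) = (fun t : ℝ => (1 + 10*s + 36*s^2 + 64*s^3 + 60*s^4 + 24*s^5) + (0 + 18*s + 96*s^2 + 208*s^3 + 240*s^4 + 120*s^5)*t^1 + (-18 - 96*s - 156*s^2 - 48*s^3 + 216*s^4 + 240*s^5)*t^2 + (0 - 104*s - 384*s^2 - 624*s^3 - 288*s^4 + 240*s^5)*t^3 + (52 + 192*s + 192*s^2 - 336*s^3 - 684*s^4 + 120*s^5)*t^4 + (0 + 144*s + 576*s^2 + 576*s^3 - 480*s^4 + 24*s^5)*t^5 + (-48 - 192*s - 24*s^2 + 720*s^3 - 120*s^4)*t^6 + (0 - 144*s - 480*s^2 + 240*s^3)*t^7 + (36 + 120*s - 240*s^2)*t^8 + (0 + 120*s)*t^9 + (-24)*t^10) := by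
    funext t; simp only [D2]; ring
  rw [e]
  convert hasDerivAt_poly10 (1 + 10*s + 36*s^2 + 64*s^3 + 60*s^4 + 24*s^5) (0 + 18*s + 96*s^2 + 208*s^3 + 240*s^4 + 120*s^5) (-18 - 96*s - 156*s^2 - 48*s^3 + 216*s^4 + 240*s^5) (0 - 104*s - 384*s^2 - 624*s^3 - 288*s^4 + 240*s^5) (52 + 192*s + 192*s^2 - 336*s^3 - 684*s^4 + 120*s^5) (0 + 144*s + 576*s^2 + 576*s^3 - 480*s^4 + 24*s^5) (-48 - 192*s - 24*s^2 + 720*s^3 - 120*s^4) (0 - 144*s - 480*s^2 + 240*s^3) (36 + 120*s - 240*s^2) (0 + 120*s) (-24) x using 1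
  simp only [D2b]; ring

lemma I2' (x u : ℝ) :
    (N2b x u - N2b u x) * D2 x u - N2 x u * (D2b x u - D2b u x) = (x - u) * Gp x u := by
  simp only [N2b, N2, D2b, D2, Gp]; ring

lemma I2 (x y : ℝ) : Fb x y - Fb y x = (x - y) * Gp x y := by
  simp only [Fb]
  linear_combination I2' x y + N2b y x * D2_symm x y - D2b y x * N2_symm x y

lemma I3 (x : ℝ) : Fb x x = pp x := by
  simp only [Fb, N2b, N2, D2b, D2, pp]; ring

lemma pp_mono {s t : ℝ} (hs : 0 < s) (hst : s < t) : pp s * t^10 < pp t * s^10 := by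
  have ht : 0 < t := hs.trans hst
  have hj1 : 0 < t^1 - s^1 := sub_pos.mpr (pow_lt_pow_left₀ hst hs.le (by norm_num))
  have hj2 : 0 < t^2 - s^2 := sub_pos.mpr (pow_lt_pow_left₀ hst hs.le (by norm_num))
  have hj3 : 0 < t^3 - s^3 := sub_pos.mpr (pow_lt_pow_left₀ hst hs.le (by norm_num))
  have hj4 : 0 < t^4 - s^4 := sub_pos.mpr (pow_lt_pow_left₀ hst hs.le (by norm_num))
  have hj5 : 0 < t^5 - s^5 := sub_pos.mpr (pow_lt_pow_left₀ hst hs.le (by norm_num))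
  have hj6 : 0 < t^6 - s^6 := sub_pos.mpr (pow_lt_pow_left₀ hst hs.le (by norm_num))
  have hj7 : 0 < t^7 - s^7 := sub_pos.mpr (pow_lt_pow_left₀ hst hs.le (by norm_num))
  have hj8 : 0 < t^8 - s^8 := sub_pos.mpr (pow_lt_pow_left₀ hst hs.le (by norm_num))
  have hj9 : 0 < t^9 - s^9 := sub_pos.mpr (pow_lt_pow_left₀ hst hs.le (by norm_num))
  have hj10 : 0 < t^10 - s^10 := sub_pos.mpr (pow_lt_pow_left₀ hst hs.le (by norm_num))
  have key : pp s * t^10 - pp t * s^10 = -(2 * (t^10 - s^10) + 62 * (s^1*t^1) * (t^9 - s^9) + 848 * (s^2*t^2) * (t^8 - s^8) + 6800 * (s^3*t^3) * (t^7 - s^7) + 35800 * (s^4*t^4) * (t^6 - s^6) + 131000 * (s^5*t^5) * (t^5 - s^5) + 342672 * (s^6*t^6) * (t^4 - s^4) + 644096 * (s^7*t^7) * (t^3 - s^3) + 847616 * (s^8*t^8) * (t^2 - s^2) + 700448 * (s^9*t^9) * (t^1 - s^1) + 432064 * (s^10*t^10) * (t^1 - s^1) + 725216 * (s^10*t^10)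 * (t^2 - s^2) + 629088 * (s^10*t^10) * (t^3 - s^3) + 358464 * (s^10*t^10) * (t^4 - s^4) + 139008 * (s^10*t^10) * (t^5 - s^5) + 35616 * (s^10*t^10) * (t^6 - s^6) + 5472 * (s^10*t^10) * (t^7 - s^7) + 384 * (s^10*t^10) * (t^8 - s^8)) := by
    simp only [pp]; ring
  have H0 : 0 < 2 * (t^10 - s^10) := mul_pos (by norm_num : (0:ℝ) < 2) hj10
  have H1 : 0 < 62 * (s^1*t^1) * (t^9 - s^9) := mul_pos (mul_pos (by norm_num : (0:ℝ) < 62) (mul_pos (pow_pos hs 1) (pow_pos ht 1))) hj9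
  have H2 : 0 < 848 * (s^2*t^2) * (t^8 - s^8) := mul_pos (mul_pos (by norm_num : (0:ℝ) < 848) (mul_pos (pow_pos hs 2) (pow_pos ht 2))) hj8
  have H3 : 0 < 6800 * (s^3*t^3) * (t^7 - s^7) := mul_pos (mul_pos (by norm_num : (0:ℝ) < 6800) (mul_pos (pow_pos hs 3) (pow_pos ht 3))) hj7
  have H4 : 0 < 35800 * (s^4*t^4) * (t^6 - s^6) := mul_pos (mul_pos (by norm_num : (0:ℝ) < 35800) (mul_pos (pow_pos hs 4) (pow_pos ht 4))) hj6
  have H5 : 0 < 131000 * (s^5*t^5) * (t^5 - s^5) := mul_pos (mul_pos (by norm_num : (0:ℝ) < 131000) (mul_pos (pow_pos hs 5) (pow_pos ht 5))) hj5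
  have H6 : 0 < 342672 * (s^6*t^6) * (t^4 - s^4) := mul_pos (mul_pos (by norm_num : (0:ℝ) < 342672) (mul_pos (pow_pos hs 6) (pow_pos ht 6))) hj4
  have H7 : 0 < 644096 * (s^7*t^7) * (t^3 - s^3) := mul_pos (mul_pos (by norm_num : (0:ℝ) < 644096) (mul_pos (pow_pos hs 7) (pow_pos ht 7))) hj3
  have H8 : 0 < 847616 * (s^8*t^8) * (t^2 - s^2) := mul_pos (mul_pos (by norm_num : (0:ℝ) < 847616) (mul_pos (pow_pos hs 8) (pow_pos ht 8))) hj2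
  have H9 : 0 < 700448 * (s^9*t^9) * (t^1 - s^1) := mul_pos (mul_pos (by norm_num : (0:ℝ) < 700448) (mul_pos (pow_pos hs 9) (pow_pos ht 9))) hj1
  have H10 : 0 < 432064 * (s^10*t^10) * (t^1 - s^1) := mul_pos (mul_pos (by norm_num : (0:ℝ) < 432064) (mul_pos (pow_pos hs 10) (pow_pos ht 10))) hj1
  have H11 : 0 < 725216 * (s^10*t^10) * (t^2 - s^2) := mul_pos (mul_pos (by norm_num : (0:ℝ) < 725216) (mul_pos (pow_pos hs 10) (pow_pos ht 10))) hj2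
  have H12 : 0 < 629088 * (s^10*t^10) * (t^3 - s^3) := mul_pos (mul_pos (by norm_num : (0:ℝ) < 629088) (mul_pos (pow_pos hs 10) (pow_pos ht 10))) hj3
  have H13 : 0 < 358464 * (s^10*t^10) * (t^4 - s^4) := mul_pos (mul_pos (by norm_num : (0:ℝ) < 358464) (mul_pos (pow_pos hs 10) (pow_pos ht 10))) hj4
  have H14 : 0 < 139008 * (s^10*t^10) * (t^5 - s^5) := mul_pos (mul_pos (by norm_num : (0:ℝ) < 139008) (mul_pos (pow_pos hs 10) (pow_pos ht 10))) hj5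
  have H15 : 0 < 35616 * (s^10*t^10) * (t^6 - s^6) := mul_pos (mul_pos (by norm_num : (0:ℝ) < 35616) (mul_pos (pow_pos hs 10) (pow_pos ht 10))) hj6
  have H16 : 0 < 5472 * (s^10*t^10) * (t^7 - s^7) := mul_pos (mul_pos (by norm_num : (0:ℝ) < 5472) (mul_pos (pow_pos hs 10) (pow_pos ht 10))) hj7
  have H17 : 0 < 384 * (s^10*t^10) * (t^8 - s^8) := mul_pos (mul_pos (by norm_num : (0:ℝ) < 384) (mul_pos (pow_pos hs 10) (pow_pos ht 10))) hj8
  nlinarith [key, H0, H1, H2, H3, H4, H5, H6, H7, H8, H9, H10, H11, H12, H13, H14, H15, H16, H17]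

lemma hasDerivAt_A2_left (x y : ℝ) (hx : 0 < x) (hy : 0 < y) :
    HasDerivAt (fun t => A2 t y) (3 * Fb x y / D2 x y ^ 2) x := by
  have hD : D2 x y ≠ 0 := (D2_pos hx hy).ne'
  have h := ((hasDerivAt_N2_left y x).const_mul 3).div (hasDerivAt_D2_left y x) hD
  have e : (fun t => A2 t y) = fun t => 3 * N2 t y / D2 t y := by
    funext t; simp only [A2]
  rw [e]
  refine h.congr_deriv (Eq.symm ?_)
  simp only [Fb]; ring

lemma hasDerivAt_A2_diag (x : ℝ) (hx : 0 < x) :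
    HasDerivAt (fun t => A2 t t) (6 * pp x / D2 x x ^ 2) x := by
  have hD : D2 x x ≠ 0 := (D2_pos hx hx).ne'
  have h := ((hasDerivAt_N2_diag x).const_mul 3).div (hasDerivAt_D2_diag x) hD
  have e : (fun t => A2 t t) = fun t => 3 * N2 t t / D2 t t := by
    funext t; simp only [A2]
  rw [e]
  refine h.congr_deriv (Eq.symm ?_)
  have h3 := I3 x
  simp only [Fb] at h3
  congr 1
  linear_combination (-6 : ℝ) * h3

lemma hasDerivAt_A2_line (s x : ℝ) (hx : 0 < x) (hxs : x < s) :
    HasDerivAt (fun t => A2 t (s - t)) (3 * ((2*x - s) * Gp x (s - x)) / D2 x (s - x) ^ 2) x := by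
  have hu : 0 < s - x := by linarith
  have hD : D2 x (s - x) ≠ 0 := (D2_pos hx hu).ne'
  have h := ((hasDerivAt_N2_line s x).const_mul 3).div (hasDerivAt_D2_line s x) hD
  have e : (fun t => A2 t (s - t)) = fun t => 3 * N2 t (s - t) / D2 t (s - t) := by
    funext t; simp only [A2]
  rw [e]
  refine h.congr_deriv (Eq.symm ?_)
  congr 1
  linear_combination (-3 : ℝ) * I2' x (s - x)

theorem A2_unique_critical_point :
    ∃ b : ℝ, 0 < b ∧
      deriv (fun t => A2 t b) b = 0 ∧ deriv (fun t => A2 b t) b = 0 ∧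
      (∀ x y : ℝ, 0 < x → 0 < y → A2 b b ≤ A2 x y) ∧
      (∀ x y : ℝ, 0 < x → 0 < y →
        deriv (fun t => A2 t y) x = 0 → deriv (fun t => A2 x t) y = 0 →
        x = b ∧ y = b) := by
  obtain ⟨b, hb_mem, hb_root⟩ : ∃ b ∈ Set.Icc (1:ℝ) 2, pp b = 0 := by
    have hcont : Continuous pp := by unfold pp; fun_prop
    have h1 : pp 1 < 0 := by norm_num [pp]
    have h2 : 0 < pp 2 := by norm_num [pp]
    obtain ⟨b, hbmem, hb⟩ := intermediate_value_Icc (by norm_num : (1:ℝ) ≤ 2)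
      hcont.continuousOn ⟨h1.le, h2.le⟩
    exact ⟨b, hbmem, hb⟩
  have hb0 : (0:ℝ) < b := lt_of_lt_of_le one_pos hb_mem.1
  have hsign_lt : ∀ t : ℝ, 0 < t → t < b → pp t < 0 := by
    intro t ht htb
    have hm := pp_mono ht htb
    rw [hb_root] at hm
    nlinarith [pow_pos hb0 10, pow_pos ht 10]
  have hsign_gt : ∀ t : ℝ, b < t → 0 < pp t := by
    intro t htb
    have hm := pp_mono hb0 htb
    rw [hb_root] at hm
    nlinarith [pow_pos hb0 10, pow_pos (hb0.trans htb) 10]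
  have diag_min : ∀ m : ℝ, 0 < m → A2 b b ≤ A2 m m := by
    intro m hm
    rcases lt_trichotomy m b with h | h | h
    · have key : StrictAntiOn (fun t => A2 t t) (Set.Icc m b) := by
        apply strictAntiOn_of_deriv_neg (convex_Icc m b)
        · intro t ht
          exact (hasDerivAt_A2_diag t (lt_of_lt_of_le hm ht.1)).differentiableAt.continuousAt.continuousWithinAt
        · intro t ht
          rw [interior_Icc] at ht
          have ht0 : 0 < t := hm.trans ht.1
          rw [(hasDerivAt_A2_diag t ht0).deriv]
          apply div_neg_of_neg_of_pos
          · have := hsign_lt t ht0 ht.2; linarith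
          · exact pow_pos (D2_pos ht0 ht0) 2
      exact (key (Set.left_mem_Icc.mpr h.le) (Set.right_mem_Icc.mpr h.le) h).le
    · rw [h]
    · have key : StrictMonoOn (fun t => A2 t t) (Set.Icc b m) := by
        apply strictMonoOn_of_deriv_pos (convex_Icc b m)
        · intro t ht
          exact (hasDerivAt_A2_diag t (lt_of_lt_of_le hb0 ht.1)).differentiableAt.continuousAt.continuousWithinAt
        · intro t ht
          rw [interior_Icc] at ht
          have ht0 : 0 < t := hb0.trans ht.1
          rw [(hasDerivAt_A2_diag t ht0).deriv]
          apply div_pos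
          · have := hsign_gt t ht.1; linarith
          · exact pow_pos (D2_pos ht0 ht0) 2
      exact (key (Set.left_mem_Icc.mpr h.le) (Set.right_mem_Icc.mpr h.le) h).le
  have line_min : ∀ x y : ℝ, 0 < y → y < x → A2 ((x+y)/2) ((x+y)/2) < A2 x y := by
    intro x y hy hyx
    have hx : 0 < x := hy.trans hyx
    set s := x + y with hs
    set m := (x + y) / 2 with hmdef
    have hm : 0 < m := by rw [hmdef]; linarith
    have hmx : m < x := by rw [hmdef]; linarith
    have key : StrictMonoOn (fun t => A2 t (s - t)) (Set.Icc m x) := by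
      apply strictMonoOn_of_deriv_pos (convex_Icc m x)
      · intro t ht
        have ht0 : 0 < t := lt_of_lt_of_le hm ht.1
        have hts : t < s := by rw [hs]; linarith [ht.2]
        exact (hasDerivAt_A2_line s t ht0 hts).differentiableAt.continuousAt.continuousWithinAt
      · intro t ht
        rw [interior_Icc] at ht
        have ht0 : 0 < t := hm.trans ht.1
        have hts : t < s := by rw [hs]; linarith [ht.2]
        rw [(hasDerivAt_A2_line s t ht0 hts).deriv]
        have hu : 0 < s - t := by linarith
        apply div_pos
        · have hG := Gp_pos ht0 hu
          have h2t : 0 < 2*t - s := by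
            have h1 := ht.1
            rw [hmdef] at h1
            rw [hs]
            linarith
          exact mul_pos (by norm_num) (mul_pos h2t hG)
        · exact pow_pos (D2_pos ht0 hu) 2
    have h : A2 m (s - m) < A2 x (s - x) :=
      key (Set.left_mem_Icc.mpr hmx.le) (Set.right_mem_Icc.mpr hmx.le) hmx
    have e1 : s - m = m := by rw [hmdef, hs]; ring
    have e2 : s - x = y := by rw [hs]; ring
    rw [e1, e2] at h
    exact h
  have hFbb : Fb b b = 0 := by rw [I3 b]; exact hb_root
  refine ⟨b, hb0, ?_, ?_, ?_, ?_⟩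
  · rw [(hasDerivAt_A2_left b b hb0 hb0).deriv, hFbb]
    simp
  · have e : (fun t => A2 b t) = (fun t => A2 t b) := funext fun t => A2_symm b t
    rw [e, (hasDerivAt_A2_left b b hb0 hb0).deriv, hFbb]
    simp
  · intro x y hx hy
    rcases lt_trichotomy x y with h | h | h
    · have hl := line_min y x hx h
      have hd := diag_min ((y+x)/2) (by linarith)
      have hsym : A2 y x = A2 x y := A2_symm y x
      linarith
    · subst h; exact diag_min x hx
    · have hl := line_min x y hy h
      have hd := diag_min ((x+y)/2) (by linarith)
      linarith
  · intro x y hx hy hdx hdy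
    rw [(hasDerivAt_A2_left x y hx hy).deriv] at hdx
    have e : (fun t => A2 x t) = (fun t => A2 t x) := funext fun t => A2_symm x t
    rw [e, (hasDerivAt_A2_left y x hy hx).deriv] at hdy
    have hD1 := (D2_pos hx hy).ne'
    have hD2 := (D2_pos hy hx).ne'
    have hfb1 : Fb x y = 0 := by
      field_simp [hD1] at hdx
      linarith
    have hfb2 : Fb y x = 0 := by
      field_simp [hD2] at hdy
      linarith
    have hI := I2 x y
    rw [hfb1, hfb2] at hI
    have hG := (Gp_pos hx hy).ne'
    have hxy : x = y := by
      have h0 : (x - y) * Gp x y = 0 := by linarith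
      rcases mul_eq_zero.mp h0 with h | h
      · linarith
      · exact absurd h hG
    subst hxy
    have hpx : pp x = 0 := by rw [← I3 x]; exact hfb1
    have hxb : x = b := by
      rcases lt_trichotomy x b with h | h | h
      · have := hsign_lt x hx h; linarith [hpx]
      · exact h
      · have := hsign_gt x h; linarith [hpx]
    exact ⟨hxb, hxb⟩
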